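/- For every integer n ≥ 2, ∑_{r=2}^{n} (n/(n-1))^n · (r/n) · (n_[r]/n^r) · (D_r/r!) = 1; that is, the law of the core size of the screaming-toes mapping, P(Ñ_n = r) = (n/(n-1))^n · (r/n) · (n_[r]/n^r) · (D_r/r!) for r = 2,…,n, is a probability distribution. -/

import Mathlib

/-! With `a r = n_[r] / n^r` one has `(r/n) a r = a r - a (r+1)`, and `D_r / r!` is the partial
sum `∑_{j ≤ r} (-1)^j / j!`. Exchanging the two summations telescopes the inner sum, because
`a (n+1) = 0`, and leaves `∑_j a j (-1)^j / j! = ∑_j C(n,j) (-1/n)^j = (1 - 1/n)^n`. -/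

open Finset

/-- Derangement number `D k = k! * ∑_{j=0}^k (-1)^j/j!`, as a real number. -/
noncomputable def derNum (k : ℕ) : ℝ :=
  (k.factorial : ℝ) * ∑ j ∈ Finset.range (k + 1), (-1 : ℝ) ^ j / (j.factorial : ℝ)

open Nat

lemma derNum_div_factorial (k : ℕ) :
    derNum k / k ! = ∑ j ∈ range (k + 1), (-1 : ℝ) ^ j / j ! := by
  rw [derNum, mul_div_cancel_left₀ _ (by positivity)]

lemma derNum_one : derNum 1 = 0 := by
  simp [derNum, sum_range_succ]

lemma Nat.cast_descFactorial_succ {R : Type*} [Ring R] (n r : ℕ) :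
    (n.descFactorial (r + 1) : R) = (n - r) * n.descFactorial r := by
  rcases le_or_gt r n with h | h
  · rw [Nat.descFactorial_succ, Nat.cast_mul, Nat.cast_sub h]
  · simp [Nat.descFactorial_of_lt h]

lemma div_mul_descFactorial_div_pow {K : Type*} [Field K] {n : ℕ} (hn : (n : K) ≠ 0) (r : ℕ) :
    r / n * (n.descFactorial r / n ^ r : K) =
      n.descFactorial r / n ^ r - n.descFactorial (r + 1) / n ^ (r + 1) := by
  rw [Nat.cast_descFactorial_succ, pow_succ]
  field_simp
  ring

lemma sum_range_sub_mul_sum_range {R : Type*} [CommRing R] (f c : ℕ → R) (N : ℕ) :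
    ∑ r ∈ range (N + 1), (f r - f (r + 1)) * ∑ j ∈ range (r + 1), c j =
      ∑ j ∈ range (N + 1), (f j - f (N + 1)) * c j := by
  induction N with
  | zero => simp
  | succ N ih =>
    rw [sum_range_succ, ih, sum_range_succ c, mul_add, mul_sum, ← add_assoc, ← sum_add_distrib,
      sum_range_succ (fun j => (f j - f (N + 1 + 1)) * c j)]
    congr 1
    exact sum_congr rfl fun j _ => by ring

lemma sum_descFactorial_div_pow_mul_neg_one_pow {K : Type*} [Field K] [CharZero K] (n : ℕ) :
    ∑ j ∈ range (n + 1), (n.descFactorial j / n ^ j : K) * ((-1) ^ j / j !) = (1 - 1 / n) ^ n := by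
  rw [sub_eq_neg_add, add_pow]
  refine sum_congr rfl fun j _ => ?_
  rw [Nat.descFactorial_eq_factorial_mul_choose, Nat.cast_mul, one_pow, mul_one, ← neg_div,
    div_pow]
  field_simp
  exact mul_div_mul_left _ _ (Nat.cast_ne_zero.2 j.factorial_ne_zero)

theorem stmt_5 (n : ℕ) (hn : 2 ≤ n) :
    ∑ r ∈ Finset.Icc 2 n,
        ((n : ℝ) / ((n : ℝ) - 1)) ^ n * ((r : ℝ) / n) *
          ((n.descFactorial r : ℝ) / (n : ℝ) ^ r) * (derNum r / (r.factorial : ℝ))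
    = 1 := by
  have hn0 : (n : ℝ) ≠ 0 := by positivity
  have hn1 : (n : ℝ) - 1 ≠ 0 := sub_ne_zero.2 (by exact_mod_cast (by omega : n ≠ 1))
  set a : ℕ → ℝ := fun r => n.descFactorial r / n ^ r
  calc _ = ∑ r ∈ range (n + 1), ((n : ℝ) / ((n : ℝ) - 1)) ^ n * ((r : ℝ) / n) * a r *
          (derNum r / r !) := by
        refine sum_subset (fun r hr => by simp at hr ⊢; omega) fun r hr hr' => ?_
        obtain rfl | rfl : r = 0 ∨ r = 1 := by simp at hr hr'; omega
        all_goals simp [derNum_one]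
    _ = (n / (n - 1)) ^ n * ∑ r ∈ range (n + 1),
          (a r - a (r + 1)) * ∑ j ∈ range (r + 1), (-1 : ℝ) ^ j / j ! := by
        rw [mul_sum]
        refine sum_congr rfl fun r _ => ?_
        rw [derNum_div_factorial, ← div_mul_descFactorial_div_pow hn0]
        ring
    _ = (n / (n - 1)) ^ n * (1 - 1 / n) ^ n := by
        have ha_succ : a (n + 1) = 0 := by simp [a]
        rw [sum_range_sub_mul_sum_range, ha_succ, ← sum_descFactorial_div_pow_mul_neg_one_pow]
        simp [a]
    _ = 1 := by
        rw [← mul_pow]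
        field_simp
        simp
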